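/- arXiv:nlin/0410014 — 3 statements merged into one kernel-verified Lean document; each statement's English description precedes it below -/
import Mathlib

section
/- The Goryachev–Chaplygin Hamiltonian H = J₁² + J₂² + 4J₃² + c·x₁ and the cubic function K = 2(J₁² + J₂²)J₃ − c·x₃J₁ satisfy {H,K} = 0 on the subset of ℝ⁶ where x₁J₁ + x₂J₂ + x₃J₃ = 0. -/
open scoped BigOperators

/-- Index of `x_i` (i = 0,1,2) in phase space `ℝ⁶ = Fin 6 → ℝ`. -/
def xIdx (i : Fin 3) : Fin 6 := ⟨i.1, by omega⟩
/-- Index of `J_i` (i = 0,1,2) in phase space. -/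
def jIdx (i : Fin 3) : Fin 6 := ⟨i.1 + 3, by omega⟩

/-- Partial derivative of `F` in the `i`-th coordinate direction. -/
noncomputable def pd (i : Fin 6) (F : (Fin 6 → ℝ) → ℝ) (z : Fin 6 → ℝ) : ℝ :=
  fderiv ℝ F z (Pi.single i 1)

/-- Levi-Civita symbol on `Fin 3`. -/
def eps (i j k : Fin 3) : ℝ :=
  if (i,j,k) = (0,1,2) ∨ (i,j,k) = (1,2,0) ∨ (i,j,k) = (2,0,1) then 1
  else if (i,j,k) = (1,0,2) ∨ (i,j,k) = (2,1,0) ∨ (i,j,k) = (0,2,1) then -1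
  else 0

/-- The e(3) Poisson bracket on smooth functions of `(x, J) ∈ ℝ⁶`, generated by
`{J_i,J_j} = ε_{ijk} J_k`, `{J_i,x_j} = ε_{ijk} x_k`, `{x_i,x_j} = 0`. -/
noncomputable def e3Bracket (F G : (Fin 6 → ℝ) → ℝ) (z : Fin 6 → ℝ) : ℝ :=
  ∑ i : Fin 3, ∑ j : Fin 3, ∑ k : Fin 3, eps i j k *
    ( z (jIdx k) * pd (jIdx i) F z * pd (jIdx j) G z
    + z (xIdx k) * pd (jIdx i) F z * pd (xIdx j) G z
    + z (xIdx k) * pd (xIdx i) F z * pd (jIdx j) G z )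

/-!
Writing the bracket with cross products,
`{F, G} = J · (∇_J F × ∇_J G) + x · (∇_J F × ∇_x G + ∇_x F × ∇_J G)`,
and inserting the explicit gradients of `H` and `K` gives `{H, K} = -2c J₂ (x · J)`.
-/

open Matrix

section PartialDerivative

variable {F G : (Fin 6 → ℝ) → ℝ} {z : Fin 6 → ℝ} (i : Fin 6)

theorem pd_apply (a : Fin 6) : pd i (fun w => w a) z = (Pi.single i 1 : Fin 6 → ℝ) a := by
  simp [pd, (hasFDerivAt_apply a z).fderiv]

theorem pd_const (a : ℝ) : pd i (fun _ => a) z = 0 := by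
  simp [pd]

theorem pd_add (hF : DifferentiableAt ℝ F z) (hG : DifferentiableAt ℝ G z) :
    pd i (fun w => F w + G w) z = pd i F z + pd i G z := by
  simp [pd, fderiv_fun_add hF hG]

theorem pd_sub (hF : DifferentiableAt ℝ F z) (hG : DifferentiableAt ℝ G z) :
    pd i (fun w => F w - G w) z = pd i F z - pd i G z := by
  simp [pd, fderiv_fun_sub hF hG]

theorem pd_mul (hF : DifferentiableAt ℝ F z) (hG : DifferentiableAt ℝ G z) :
    pd i (fun w => F w * G w) z = F z * pd i G z + pd i F z * G z := by
  simp [pd, fderiv_fun_mul hF hG, mul_comm]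

theorem pd_pow (n : ℕ) (hF : DifferentiableAt ℝ F z) :
    pd i (fun w => F w ^ n) z = n * F z ^ (n - 1) * pd i F z := by
  simp [pd, fderiv_fun_pow n hF]

end PartialDerivative

theorem jIdx_injective : Function.Injective jIdx := by
  intro i j h
  simpa [jIdx, Fin.ext_iff] using h

theorem xIdx_injective : Function.Injective xIdx := by
  intro i j h
  simpa [xIdx, Fin.ext_iff] using h

theorem xIdx_ne_jIdx (i j : Fin 3) : xIdx i ≠ jIdx j := by
  simp only [xIdx, jIdx, ne_eq, Fin.mk.injEq]
  omega

def jVec (z : Fin 6 → ℝ) : Fin 3 → ℝ := fun i => z (jIdx i)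

def xVec (z : Fin 6 → ℝ) : Fin 3 → ℝ := fun i => z (xIdx i)

noncomputable def gradJ (F : (Fin 6 → ℝ) → ℝ) (z : Fin 6 → ℝ) : Fin 3 → ℝ :=
  fun i => pd (jIdx i) F z

noncomputable def gradX (F : (Fin 6 → ℝ) → ℝ) (z : Fin 6 → ℝ) : Fin 3 → ℝ :=
  fun i => pd (xIdx i) F z

theorem e3Bracket_eq_dotProduct_cross (F G : (Fin 6 → ℝ) → ℝ) (z : Fin 6 → ℝ) :
    e3Bracket F G z = jVec z ⬝ᵥ (gradJ F z ⨯₃ gradJ G z)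
      + xVec z ⬝ᵥ (gradJ F z ⨯₃ gradX G z + gradX F z ⨯₃ gradJ G z) := by
  simp only [e3Bracket, eps, Fin.sum_univ_three, dotProduct, cross_apply, jVec, xVec, gradJ, gradX,
    Pi.add_apply, cons_val_zero, cons_val_one, cons_val, Fin.isValue, Prod.mk.injEq, Fin.reduceEq,
    and_false, and_true, or_false, false_or, or_self, ↓reduceIte]
  ring

def gcHamiltonian (c : ℝ) : (Fin 6 → ℝ) → ℝ := fun z =>
  z (jIdx 0) ^ 2 + z (jIdx 1) ^ 2 + 4 * z (jIdx 2) ^ 2 + c * z (xIdx 0)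

def gcIntegral (c : ℝ) : (Fin 6 → ℝ) → ℝ := fun z =>
  2 * (z (jIdx 0) ^ 2 + z (jIdx 1) ^ 2) * z (jIdx 2) - c * z (xIdx 2) * z (jIdx 0)

section Gradients

variable (c : ℝ) (z : Fin 6 → ℝ)

theorem gradJ_gcHamiltonian :
    gradJ (gcHamiltonian c) z = ![2 * z (jIdx 0), 2 * z (jIdx 1), 8 * z (jIdx 2)] := by
  ext i
  unfold gradJ gcHamiltonian
  fin_cases i <;>
    simp (disch := fun_prop) only [pd_add, pd_mul, pd_const, pd_pow, pd_apply,
      Pi.single_apply, jIdx_injective.eq_iff, xIdx_ne_jIdx, Fin.zero_eta, Fin.mk_one,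
      Fin.reduceFinMk, Fin.isValue, Fin.reduceEq, if_true, if_false, cons_val_zero, cons_val_one,
      cons_val_two, head_cons, tail_cons] <;>
    ring

theorem gradX_gcHamiltonian : gradX (gcHamiltonian c) z = ![c, 0, 0] := by
  ext i
  unfold gradX gcHamiltonian
  fin_cases i <;>
    simp (disch := fun_prop) only [pd_add, pd_mul, pd_const, pd_pow, pd_apply,
      Pi.single_apply, xIdx_injective.eq_iff, (xIdx_ne_jIdx _ _).symm, Fin.zero_eta, Fin.mk_one,
      Fin.reduceFinMk, Fin.isValue, Fin.reduceEq, if_true, if_false, cons_val_zero, cons_val_one,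
      cons_val_two, head_cons, tail_cons] <;>
    ring

theorem gradJ_gcIntegral :
    gradJ (gcIntegral c) z = ![4 * z (jIdx 0) * z (jIdx 2) - c * z (xIdx 2),
      4 * z (jIdx 1) * z (jIdx 2), 2 * (z (jIdx 0) ^ 2 + z (jIdx 1) ^ 2)] := by
  ext i
  unfold gradJ gcIntegral
  fin_cases i <;>
    simp (disch := fun_prop) only [pd_sub, pd_mul, pd_add, pd_const, pd_pow, pd_apply,
      Pi.single_apply, jIdx_injective.eq_iff, xIdx_ne_jIdx, Fin.zero_eta, Fin.mk_one,
      Fin.reduceFinMk, Fin.isValue, Fin.reduceEq, if_true, if_false, cons_val_zero, cons_val_one,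
      cons_val_two, head_cons, tail_cons] <;>
    ring

theorem gradX_gcIntegral : gradX (gcIntegral c) z = ![0, 0, -c * z (jIdx 0)] := by
  ext i
  unfold gradX gcIntegral
  fin_cases i <;>
    simp (disch := fun_prop) only [pd_sub, pd_mul, pd_add, pd_const, pd_pow, pd_apply,
      Pi.single_apply, xIdx_injective.eq_iff, (xIdx_ne_jIdx _ _).symm, Fin.zero_eta, Fin.mk_one,
      Fin.reduceFinMk, Fin.isValue, Fin.reduceEq, if_true, if_false, cons_val_zero, cons_val_one,
      cons_val_two, head_cons, tail_cons] <;>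
    ring

end Gradients

theorem e3Bracket_gcHamiltonian_gcIntegral (c : ℝ) (z : Fin 6 → ℝ) :
    e3Bracket (gcHamiltonian c) (gcIntegral c) z =
      -2 * c * z (jIdx 1) * (xVec z ⬝ᵥ jVec z) := by
  rw [e3Bracket_eq_dotProduct_cross, gradJ_gcHamiltonian, gradX_gcHamiltonian, gradJ_gcIntegral,
    gradX_gcIntegral]
  simp only [dotProduct, Fin.sum_univ_three, cross_apply, jVec, xVec, Pi.add_apply, cons_val_zero,
    cons_val_one, cons_val]
  ring

/-- The Goryachev–Chaplygin Hamiltonian `H = J₁²+J₂²+4J₃²+c x₁` and the cubic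
integral `K = 2(J₁²+J₂²)J₃ − c x₃ J₁` satisfy `{H,K} = 0` wherever `x·J = 0`. -/
theorem goryachev_chaplygin_commute (c : ℝ)
    (H K : (Fin 6 → ℝ) → ℝ)
    (hH : H = fun z => (z (jIdx 0))^2 + (z (jIdx 1))^2 + 4*(z (jIdx 2))^2 + c * z (xIdx 0))
    (hK : K = fun z => 2*((z (jIdx 0))^2 + (z (jIdx 1))^2) * z (jIdx 2)
                        - c * z (xIdx 2) * z (jIdx 0)) :
    ∀ z : Fin 6 → ℝ,
      z (xIdx 0) * z (jIdx 0) + z (xIdx 1) * z (jIdx 1) + z (xIdx 2) * z (jIdx 2) = 0 →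
      e3Bracket H K z = 0 := by
  intro z hz
  have hxJ : xVec z ⬝ᵥ jVec z = 0 := by
    simpa [dotProduct, Fin.sum_univ_three, xVec, jVec] using hz
  obtain rfl : H = gcHamiltonian c := hH
  obtain rfl : K = gcIntegral c := hK
  rw [e3Bracket_gcHamiltonian_gcIntegral, hxJ, mul_zero]
end

section
/- For any real α ≠ 0 and any smooth functions f,g of x₃, the two functions q₁,₂ = αJ₃ ± √(J₁² + J₂² + f(x₃)J₃ + g(x₃)) Poisson-commute with respect to the e(3) bracket on the open set where the radicand is positive and x₁J₁ + x₂J₂ + x₃J₃ = 0 — in fact {q₁,q₂} = 0 holds identically wherever both functions are defined and smooth. -/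
open scoped BigOperators

noncomputable def P6 (i : Fin 6) : (Fin 6 → ℝ) →L[ℝ] ℝ := ContinuousLinearMap.proj i

lemma hq_deriv (α s : ℝ) (f g : ℝ → ℝ) (hf : ContDiff ℝ (⊤ : ℕ∞) f) (hg : ContDiff ℝ (⊤ : ℕ∞) g)
    (z : Fin 6 → ℝ)
    (hR : (z 3)^2 + (z 4)^2 + f (z 2) * z 5 + g (z 2) ≠ 0) :
    HasFDerivAt (fun w : Fin 6 → ℝ => α * w 5 + s * Real.sqrt ((w 3)^2 + (w 4)^2 + f (w 2) * w 5 + g (w 2)))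
      (α • P6 5 + s • ((1 / (2 * Real.sqrt ((z 3)^2 + (z 4)^2 + f (z 2) * z 5 + g (z 2)))) •
        (((2 * z 3) • P6 3 + (2 * z 4) • P6 4) +
         (f (z 2) • P6 5 + z 5 • deriv f (z 2) • P6 2) + deriv g (z 2) • P6 2))) z := by
  have h2 : HasFDerivAt (fun w : Fin 6 → ℝ => w 2) (P6 2) z := (P6 2).hasFDerivAt
  have h3 : HasFDerivAt (fun w : Fin 6 → ℝ => w 3) (P6 3) z := (P6 3).hasFDerivAt
  have h4 : HasFDerivAt (fun w : Fin 6 → ℝ => w 4) (P6 4) z := (P6 4).hasFDerivAt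
  have h5 : HasFDerivAt (fun w : Fin 6 → ℝ => w 5) (P6 5) z := (P6 5).hasFDerivAt
  have hf2 : HasFDerivAt (fun w : Fin 6 → ℝ => f (w 2)) (deriv f (z 2) • P6 2) z :=
    ((hf.differentiable (by simp) (z 2)).hasDerivAt).comp_hasFDerivAt z h2
  have hg2 : HasFDerivAt (fun w : Fin 6 → ℝ => g (w 2)) (deriv g (z 2) • P6 2) z :=
    ((hg.differentiable (by simp) (z 2)).hasDerivAt).comp_hasFDerivAt z h2
  have hsq3 : HasFDerivAt (fun w : Fin 6 → ℝ => (w 3)^2) ((2 * z 3) • P6 3) z := by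
    simpa [pow_two, two_mul, add_smul, Pi.mul_def] using h3.mul h3
  have hsq4 : HasFDerivAt (fun w : Fin 6 → ℝ => (w 4)^2) ((2 * z 4) • P6 4) z := by
    simpa [pow_two, two_mul, add_smul, Pi.mul_def] using h4.mul h4
  have hmul : HasFDerivAt (fun w : Fin 6 → ℝ => f (w 2) * w 5)
      (f (z 2) • P6 5 + z 5 • deriv f (z 2) • P6 2) z := by
    exact hf2.mul h5
  have hR' : HasFDerivAt (fun w : Fin 6 → ℝ => (w 3)^2 + (w 4)^2 + f (w 2) * w 5 + g (w 2))
      ((((2 * z 3) • P6 3 + (2 * z 4) • P6 4) +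
        (f (z 2) • P6 5 + z 5 • deriv f (z 2) • P6 2) + deriv g (z 2) • P6 2)) z := by
    have := ((hsq3.add hsq4).add hmul).add hg2
    exact this
  have hs := (Real.hasDerivAt_sqrt hR).comp_hasFDerivAt z hR'
  exact (h5.const_mul α).add (hs.const_mul s)


set_option maxHeartbeats 2000000 in
/-- For any `α ≠ 0` and smooth `f, g` of `x₃`, the generalized separated variables
`q₁,₂ = αJ₃ ± √(J₁²+J₂²+f(x₃)J₃+g(x₃))` Poisson-commute on the open set where the
radicand is positive and `x·J = 0`. -/
theorem generalized_variables_commute (α : ℝ) (hα : α ≠ 0)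
    (f g : ℝ → ℝ) (hf : ContDiff ℝ (⊤ : ℕ∞) f) (hg : ContDiff ℝ (⊤ : ℕ∞) g)
    (q₁ q₂ : (Fin 6 → ℝ) → ℝ)
    (hq₁ : q₁ = fun z => α * z (jIdx 2) +
      Real.sqrt ((z (jIdx 0))^2 + (z (jIdx 1))^2 + f (z (xIdx 2)) * z (jIdx 2)
        + g (z (xIdx 2))))
    (hq₂ : q₂ = fun z => α * z (jIdx 2) -
      Real.sqrt ((z (jIdx 0))^2 + (z (jIdx 1))^2 + f (z (xIdx 2)) * z (jIdx 2)
        + g (z (xIdx 2)))) :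
    ∀ z : Fin 6 → ℝ,
      0 < (z (jIdx 0))^2 + (z (jIdx 1))^2 + f (z (xIdx 2)) * z (jIdx 2) + g (z (xIdx 2)) →
      z (xIdx 0) * z (jIdx 0) + z (xIdx 1) * z (jIdx 1) + z (xIdx 2) * z (jIdx 2) = 0 →
      e3Bracket q₁ q₂ z = 0 := by
  subst hq₁ hq₂
  intro z hpos _
  simp only [show jIdx (2:Fin 3) = (5:Fin 6) from rfl, show jIdx (1:Fin 3) = (4:Fin 6) from rfl,
    show jIdx (0:Fin 3) = (3:Fin 6) from rfl, show xIdx (2:Fin 3) = (2:Fin 6) from rfl,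
    show xIdx (1:Fin 3) = (1:Fin 6) from rfl, show xIdx (0:Fin 3) = (0:Fin 6) from rfl] at hpos ⊢
  have hRne : (z 3)^2 + (z 4)^2 + f (z 2) * z 5 + g (z 2) ≠ 0 := ne_of_gt hpos
  have hd1 := hq_deriv α 1 f g hf hg z hRne
  have hd2 := hq_deriv α (-1) f g hf hg z hRne
  have e1 : (fun w : Fin 6 → ℝ => α * w 5 +
      Real.sqrt ((w 3)^2 + (w 4)^2 + f (w 2) * w 5 + g (w 2))) =
      (fun w : Fin 6 → ℝ => α * w 5 +
      1 * Real.sqrt ((w 3)^2 + (w 4)^2 + f (w 2) * w 5 + g (w 2))) := by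
    funext w; ring
  have e2 : (fun w : Fin 6 → ℝ => α * w 5 -
      Real.sqrt ((w 3)^2 + (w 4)^2 + f (w 2) * w 5 + g (w 2))) =
      (fun w : Fin 6 → ℝ => α * w 5 +
      (-1) * Real.sqrt ((w 3)^2 + (w 4)^2 + f (w 2) * w 5 + g (w 2))) := by
    funext w; ring
  have hS : Real.sqrt ((z 3)^2 + (z 4)^2 + f (z 2) * z 5 + g (z 2)) ≠ 0 := by
    positivity
  simp only [e3Bracket, pd, Fin.sum_univ_three,
    show jIdx (2:Fin 3) = (5:Fin 6) from rfl, show jIdx (1:Fin 3) = (4:Fin 6) from rfl,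
    show jIdx (0:Fin 3) = (3:Fin 6) from rfl, show xIdx (2:Fin 3) = (2:Fin 6) from rfl,
    show xIdx (1:Fin 3) = (1:Fin 6) from rfl, show xIdx (0:Fin 3) = (0:Fin 6) from rfl,
    e1, e2, hd1.fderiv, hd2.fderiv]
  simp (config := { decide := true }) only [eps, Prod.mk.injEq,
    ContinuousLinearMap.add_apply, ContinuousLinearMap.smul_apply,
    P6, ContinuousLinearMap.proj_apply, Pi.single_apply, smul_eq_mul,
    if_true, if_false, one_mul, neg_mul, mul_zero, zero_mul, add_zero, zero_add, mul_one]
  ring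
end

section
/- The function n(x₃) = c·(x₃ + a)^{1/6} solves the differential equation 24α² − 9 = 15·(x₃n′ − n″(a² − x₃²))/n + (3x₃n″ − n‴(a² − x₃²))/n′·(9 − n n″/(n′)²) + n·(5x₃n‴ − n⁗(a² − x₃²) + 3n″)/(n′)² if and only if α² = 1/36, for all x₃ > −a. -/
open Real Filter

lemma deriv_cmul_rpow (a c p : ℝ) {t : ℝ} (ht : -a < t) :
    deriv (fun s => c * (s + a) ^ p) t = (c * p) * (t + a) ^ (p - 1) := by
  have h0 : (0:ℝ) < t + a := by linarith
  have h1 : HasDerivAt (fun s : ℝ => s + a) 1 t := (hasDerivAt_id t).add_const a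
  have h2 := (Real.hasDerivAt_rpow_const (x := t + a) (p := p) (Or.inl h0.ne')).comp t h1
  have h2' : HasDerivAt (fun s : ℝ => (s + a) ^ p) (p * (t + a) ^ (p - 1) * 1) t := h2
  have h3 := (h2'.const_mul c).deriv
  rw [h3]; ring

lemma deriv_cmul_rpow_ev (a c p : ℝ) {t : ℝ} (ht : -a < t) :
    deriv (fun s => c * (s + a) ^ p) =ᶠ[nhds t] fun s => (c * p) * (s + a) ^ (p - 1) := by
  filter_upwards [Ioi_mem_nhds ht] with s hs using deriv_cmul_rpow a c p hs

lemma nd1 (a c : ℝ) {t : ℝ} (ht : -a < t) :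
    deriv (fun s => c * (s + a) ^ ((1:ℝ)/6)) t
      = (c * (1/6)) * (t + a) ^ ((1:ℝ)/6 - 1) :=
  deriv_cmul_rpow a c (1/6) ht

lemma nd2 (a c : ℝ) {t : ℝ} (ht : -a < t) :
    deriv^[2] (fun s => c * (s + a) ^ ((1:ℝ)/6)) t
      = (c * (1/6) * ((1:ℝ)/6 - 1)) * (t + a) ^ ((1:ℝ)/6 - 1 - 1) := by
  have : deriv^[2] (fun s => c * (s + a) ^ ((1:ℝ)/6)) t
      = deriv (deriv (fun s => c * (s + a) ^ ((1:ℝ)/6))) t := rfl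
  rw [this, (deriv_cmul_rpow_ev a c (1/6) ht).deriv_eq,
    deriv_cmul_rpow a (c * (1/6)) ((1:ℝ)/6 - 1) ht]

lemma nd2_ev (a c : ℝ) {t : ℝ} (ht : -a < t) :
    deriv^[2] (fun s => c * (s + a) ^ ((1:ℝ)/6))
      =ᶠ[nhds t] fun s => (c * (1/6) * ((1:ℝ)/6 - 1)) * (s + a) ^ ((1:ℝ)/6 - 1 - 1) := by
  filter_upwards [Ioi_mem_nhds ht] with s hs using nd2 a c hs

lemma nd3 (a c : ℝ) {t : ℝ} (ht : -a < t) :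
    deriv^[3] (fun s => c * (s + a) ^ ((1:ℝ)/6)) t
      = (c * (1/6) * ((1:ℝ)/6 - 1) * ((1:ℝ)/6 - 1 - 1))
          * (t + a) ^ ((1:ℝ)/6 - 1 - 1 - 1) := by
  have : deriv^[3] (fun s => c * (s + a) ^ ((1:ℝ)/6)) t
      = deriv (deriv^[2] (fun s => c * (s + a) ^ ((1:ℝ)/6))) t := rfl
  rw [this, (nd2_ev a c ht).deriv_eq,
    deriv_cmul_rpow a (c * (1/6) * ((1:ℝ)/6 - 1)) ((1:ℝ)/6 - 1 - 1) ht]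

lemma nd3_ev (a c : ℝ) {t : ℝ} (ht : -a < t) :
    deriv^[3] (fun s => c * (s + a) ^ ((1:ℝ)/6))
      =ᶠ[nhds t] fun s => (c * (1/6) * ((1:ℝ)/6 - 1) * ((1:ℝ)/6 - 1 - 1))
          * (s + a) ^ ((1:ℝ)/6 - 1 - 1 - 1) := by
  filter_upwards [Ioi_mem_nhds ht] with s hs using nd3 a c hs

lemma nd4 (a c : ℝ) {t : ℝ} (ht : -a < t) :
    deriv^[4] (fun s => c * (s + a) ^ ((1:ℝ)/6)) t
      = (c * (1/6) * ((1:ℝ)/6 - 1) * ((1:ℝ)/6 - 1 - 1) * ((1:ℝ)/6 - 1 - 1 - 1))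
          * (t + a) ^ ((1:ℝ)/6 - 1 - 1 - 1 - 1) := by
  have : deriv^[4] (fun s => c * (s + a) ^ ((1:ℝ)/6)) t
      = deriv (deriv^[3] (fun s => c * (s + a) ^ ((1:ℝ)/6))) t := rfl
  rw [this, (nd3_ev a c ht).deriv_eq,
    deriv_cmul_rpow a (c * (1/6) * ((1:ℝ)/6 - 1) * ((1:ℝ)/6 - 1 - 1))
      ((1:ℝ)/6 - 1 - 1 - 1) ht]

/-- The right-hand side of the fourth-order differential equation (meq) of the paper:
`15(x₃n′−n″(a²−x₃²))/n + (3x₃n″−n‴(a²−x₃²))/n′·(9−nn″/(n′)²)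
 + n(5x₃n‴−n⁗(a²−x₃²)+3n″)/(n′)²`. -/
noncomputable def odeRHS (a : ℝ) (n : ℝ → ℝ) (t : ℝ) : ℝ :=
  15 * (t * deriv n t - (deriv^[2] n t) * (a^2 - t^2)) / n t
  + (3*t*(deriv^[2] n t) - (deriv^[3] n t) * (a^2 - t^2)) / deriv n t
      * (9 - n t * (deriv^[2] n t) / (deriv n t)^2)
  + n t * (5*t*(deriv^[3] n t) - (deriv^[4] n t) * (a^2 - t^2) + 3*(deriv^[2] n t))
      / (deriv n t)^2

lemma rhs_const (a c : ℝ) (hc : c ≠ 0) {t : ℝ} (ht : -a < t) :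
    odeRHS a (fun s => c * (s + a) ^ ((1:ℝ)/6)) t = -25/3 := by
  have hu : (0:ℝ) < t + a := by linarith
  rw [odeRHS, nd1 a c ht, nd2 a c ht, nd3 a c ht, nd4 a c ht]
  set u : ℝ := t + a with hudef
  set v : ℝ := u ^ ((1:ℝ)/6) with hvdef
  have hv : 0 < v := Real.rpow_pos_of_pos hu _
  have hv6 : v ^ (6:ℕ) = u := by
    rw [hvdef, ← Real.rpow_natCast (u ^ ((1:ℝ)/6)) 6, ← Real.rpow_mul hu.le]
    norm_num
  have e : ∀ k : ℕ, u ^ ((1:ℝ)/6 - k) = v / u ^ k := by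
    intro k
    rw [Real.rpow_sub hu, Real.rpow_natCast, hvdef]
  have e1 : u ^ ((1:ℝ)/6 - 1) = v / u ^ (1:ℕ) := by rw [← e 1]; norm_num
  have e2 : u ^ ((1:ℝ)/6 - 1 - 1) = v / u ^ (2:ℕ) := by rw [← e 2]; norm_num
  have e3 : u ^ ((1:ℝ)/6 - 1 - 1 - 1) = v / u ^ (3:ℕ) := by rw [← e 3]; norm_num
  have e4 : u ^ ((1:ℝ)/6 - 1 - 1 - 1 - 1) = v / u ^ (4:ℕ) := by rw [← e 4]; norm_num
  have hA : a ^ 2 - t ^ 2 = (a - t) * u := by rw [hudef]; ring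
  have hta : t = u - a := by rw [hudef]; ring
  rw [e1, e2, e3, e4, hA, hta, ← hv6]
  field_simp
  ring

/-- Case 3 of (msol): `n(x₃) = c (x₃+a)^{1/6}` solves (meq) for all `x₃ > −a`
if and only if `α² = 1/36`. -/
theorem ode_case_sixth_root (a c α : ℝ) (hc : c ≠ 0) :
    (∀ t : ℝ, -a < t →
      24*α^2 - 9 = odeRHS a (fun s => c * (s + a) ^ ((1:ℝ)/6)) t) ↔ α^2 = 1/36 := by
  constructor
  · intro h
    have ht : -a < 1 - a := by linarith
    have := h (1 - a) ht
    rw [rhs_const a c hc ht] at this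
    linarith
  · intro hα t ht
    rw [rhs_const a c hc ht, hα]
    norm_num
end
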